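/- Let α be a real number with 0 ≤ α < 2/3 and let n ≥ 25 be an integer. Then λ_α(K_2 ∨ (K_{n−4} ∪ 2K_1)) < n − 2. -/

import Mathlib

/-!
A nonnegative matrix `M` with a positive vector `w` such that `M w ≤ c w` has every real
eigenvalue of modulus at most `c`: at an entry `i` of an eigenvector `x` maximising
`|x i| / w i`, the eigenvalue equation is dominated by the row `i` of `M w`.
For `K₂ ∨ (K_{n-4} ∪ 2K₁)` take `w = 5/4` on the two dominating vertices and `w = 1`
elsewhere; then `A_α w ≤ (n - 5/2) w`.
-/

open SimpleGraph

/-- The `Aα`-matrix of a finite simple graph: `Aα(G) = α·D(G) + (1-α)·A(G)`. -/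
noncomputable def aAlphaMatrix {V : Type*} [Finite V] (α : ℝ) (G : SimpleGraph V) :
    Matrix V V ℝ :=
  letI := Fintype.ofFinite V
  letI := Classical.decEq V
  letI : DecidableRel G.Adj := Classical.decRel _
  α • Matrix.diagonal (fun v => (G.degree v : ℝ)) + (1 - α) • (G.adjMatrix ℝ)

/-- The `Aα`-spectral radius: the largest eigenvalue of `Aα(G)` (the supremum of its real
spectrum; all eigenvalues of this symmetric matrix are real). -/
noncomputable def lambdaAlpha {V : Type*} [Finite V] (α : ℝ) (G : SimpleGraph V) : ℝ :=
  letI := Fintype.ofFinite V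
  letI := Classical.decEq V
  sSup (spectrum ℝ (aAlphaMatrix α G))

/-- The join `G ∨ H` of two graphs on disjoint vertex sets. -/
def graphJoin {V W : Type*} (G : SimpleGraph V) (H : SimpleGraph W) : SimpleGraph (V ⊕ W) where
  Adj x y :=
    match x, y with
    | Sum.inl a, Sum.inl b => G.Adj a b
    | Sum.inr a, Sum.inr b => H.Adj a b
    | Sum.inl _, Sum.inr _ => True
    | Sum.inr _, Sum.inl _ => True
  symm := by
    refine ⟨?_⟩
    rintro (a | a) (b | b) h
    · exact G.adj_symm h
    · trivial
    · trivial
    · exact H.adj_symm h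
  loopless := by
    refine ⟨?_⟩
    rintro (a | a) h
    · exact G.ne_of_adj h rfl
    · exact H.ne_of_adj h rfl

/-- `G` has an `H`-factor where `H` consists of the paths `P_k` for `k ∈ ks`: a spanning
subgraph all of whose connected components are paths `P_k` with `k ∈ ks`. -/
def HasPathFactor {V : Type*} (G : SimpleGraph V) (ks : Set ℕ) : Prop :=
  ∃ F : SimpleGraph V, F ≤ G ∧
    ∀ c : F.ConnectedComponent, ∃ k ∈ ks, Nonempty ((F.induce c.supp) ≃g pathGraph k)

/-- `K_1 ∨ (K_{n-2} ∪ K_1)`. -/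
def specialGraph (n : ℕ) : SimpleGraph (Fin 1 ⊕ (Fin (n - 2) ⊕ Fin 1)) :=
  graphJoin (⊤ : SimpleGraph (Fin 1))
    ((⊤ : SimpleGraph (Fin (n - 2))) ⊕g (⊤ : SimpleGraph (Fin 1)))

open Finset Matrix

namespace Matrix

variable {ι : Type*} [Fintype ι] [DecidableEq ι]

theorem exists_mulVec_eq_smul_of_mem_spectrum {K : Type*} [Field K] {M : Matrix ι ι K} {μ : K}
    (hμ : μ ∈ spectrum K M) : ∃ x ≠ 0, M *ᵥ x = μ • x := by
  rw [← spectrum_toLin', ← Module.End.hasEigenvalue_iff_mem_spectrum] at hμ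
  obtain ⟨x, hx, hx0⟩ := hμ.exists_hasEigenvector
  exact ⟨x, hx0, Module.End.mem_eigenspace_iff.1 hx⟩

theorem abs_le_of_mem_spectrum_of_mulVec_le {M : Matrix ι ι ℝ} (hM : ∀ i j, 0 ≤ M i j)
    {w : ι → ℝ} (hw : ∀ i, 0 < w i) {c : ℝ} (hMw : M *ᵥ w ≤ c • w) {μ : ℝ}
    (hμ : μ ∈ spectrum ℝ M) : |μ| ≤ c := by
  obtain ⟨x, hx0, hMx⟩ := exists_mulVec_eq_smul_of_mem_spectrum hμ
  obtain ⟨j, hj⟩ := Function.ne_iff.mp hx0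
  obtain ⟨i, -, hi⟩ := exists_max_image univ (fun j => |x j| / w j) ⟨j, mem_univ j⟩
  set t := |x i| / w i
  have ht : 0 < t := (div_pos (abs_pos.2 hj) (hw j)).trans_le (hi j (mem_univ j))
  have hxi : |x i| = t * w i := (div_mul_cancel₀ _ (hw i).ne').symm
  have hxw : ∀ j, |x j| ≤ t * w j := fun j => (div_le_iff₀ (hw j)).1 (hi j (mem_univ j))
  have key : |μ| * |x i| ≤ c * |x i| := calc
    |μ| * |x i| = |∑ j, M i j * x j| := by
      rw [← abs_mul, ← smul_eq_mul, ← Pi.smul_apply, ← hMx]; rfl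
    _ ≤ ∑ j, M i j * |x j| := (abs_sum_le_sum_abs _ _).trans_eq <|
      sum_congr rfl fun j _ => by rw [abs_mul, abs_of_nonneg (hM i j)]
    _ ≤ ∑ j, M i j * (t * w j) :=
      sum_le_sum fun j _ => mul_le_mul_of_nonneg_left (hxw j) (hM i j)
    _ = t * (M *ᵥ w) i := by
      rw [mulVec, dotProduct, mul_sum]
      exact sum_congr rfl fun j _ => by ring
    _ ≤ t * (c * w i) := mul_le_mul_of_nonneg_left (hMw i) ht.le
    _ = c * |x i| := by rw [hxi]; ring
  exact le_of_mul_le_mul_right key (by rw [hxi]; exact mul_pos ht (hw i))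

end Matrix

section AlphaMatrix

variable {V : Type*} (α : ℝ) (G : SimpleGraph V)

theorem aAlphaMatrix_eq [Fintype V] [DecidableEq V] [DecidableRel G.Adj] :
    aAlphaMatrix α G =
      α • diagonal (fun v => (G.degree v : ℝ)) + (1 - α) • G.adjMatrix ℝ := by
  unfold aAlphaMatrix
  congr!

theorem lambdaAlpha_eq_sSup_spectrum [Fintype V] [DecidableEq V] :
    lambdaAlpha α G = sSup (spectrum ℝ (aAlphaMatrix α G)) := by
  unfold lambdaAlpha
  congr!

variable {α}

theorem aAlphaMatrix_nonneg [Finite V] (hα0 : 0 ≤ α) (hα1 : α ≤ 1) (u v : V) :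
    0 ≤ aAlphaMatrix α G u v := by
  classical
  cases nonempty_fintype V
  rw [aAlphaMatrix_eq]
  simp only [Matrix.add_apply, Matrix.smul_apply, diagonal_apply, adjMatrix_apply, smul_eq_mul]
  have : 0 ≤ 1 - α := sub_nonneg.2 hα1
  positivity

theorem aAlphaMatrix_mulVec_apply [Fintype V] [DecidableEq V] [DecidableRel G.Adj]
    (w : V → ℝ) (v : V) :
    (aAlphaMatrix α G *ᵥ w) v =
      α * G.degree v * w v + (1 - α) * ∑ u ∈ G.neighborFinset v, w u := by
  simp [aAlphaMatrix_eq, add_mulVec, smul_mulVec, mulVec_diagonal, mul_assoc]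

theorem lambdaAlpha_le_of_forall_le [Fintype V] [DecidableRel G.Adj] (hα0 : 0 ≤ α)
    (hα1 : α ≤ 1) {w : V → ℝ} (hw : ∀ v, 0 < w v) {c : ℝ} (hc : 0 ≤ c)
    (h : ∀ v, α * G.degree v * w v + (1 - α) * ∑ u ∈ G.neighborFinset v, w u ≤ c * w v) :
    lambdaAlpha α G ≤ c := by
  classical
  rw [lambdaAlpha_eq_sSup_spectrum]
  refine Real.sSup_le (fun μ hμ => (le_abs_self μ).trans ?_) hc
  refine abs_le_of_mem_spectrum_of_mulVec_le (aAlphaMatrix_nonneg G hα0 hα1) hw (fun v => ?_) hμ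
  simpa [aAlphaMatrix_mulVec_apply] using h v

end AlphaMatrix

namespace SimpleGraph

variable {V W : Type*} (G : SimpleGraph V) (H : SimpleGraph W)

@[simp]
theorem graphJoin_adj_inl_inl {v v' : V} :
    (graphJoin G H).Adj (.inl v) (.inl v') ↔ G.Adj v v' :=
  Iff.rfl

@[simp]
theorem graphJoin_adj_inr_inr {w w' : W} :
    (graphJoin G H).Adj (.inr w) (.inr w') ↔ H.Adj w w' :=
  Iff.rfl

@[simp]
theorem graphJoin_adj_inl_inr {v : V} {w : W} : (graphJoin G H).Adj (.inl v) (.inr w) :=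
  trivial

@[simp]
theorem graphJoin_adj_inr_inl {v : V} {w : W} : (graphJoin G H).Adj (.inr w) (.inl v) :=
  trivial

theorem neighborFinset_sum_inl (v : V) [Fintype (G.neighborSet v)]
    [Fintype ((G ⊕g H).neighborSet (.inl v))] :
    (G ⊕g H).neighborFinset (.inl v) = (G.neighborFinset v).disjSum ∅ := by
  ext (u | u) <;> simp

theorem neighborFinset_sum_inr (w : W) [Fintype (H.neighborSet w)]
    [Fintype ((G ⊕g H).neighborSet (.inr w))] :
    (G ⊕g H).neighborFinset (.inr w) = (∅ : Finset V).disjSum (H.neighborFinset w) := by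
  ext (u | u) <;> simp

theorem neighborFinset_graphJoin_inl [Fintype W] (v : V) [Fintype (G.neighborSet v)]
    [Fintype ((graphJoin G H).neighborSet (.inl v))] :
    (graphJoin G H).neighborFinset (.inl v) = (G.neighborFinset v).disjSum univ := by
  ext (u | u) <;> simp

theorem neighborFinset_graphJoin_inr [Fintype V] (w : W) [Fintype (H.neighborSet w)]
    [Fintype ((graphJoin G H).neighborSet (.inr w))] :
    (graphJoin G H).neighborFinset (.inr w) = univ.disjSum (H.neighborFinset w) := by
  ext (u | u) <;> simp

end SimpleGraph

theorem lambdaAlpha_graphJoin_top_sum_top_bot_le {α : ℝ} (hα0 : 0 ≤ α) (hα1 : α < 2 / 3)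
    {m : ℕ} (hm : 21 ≤ m) :
    lambdaAlpha α (graphJoin (⊤ : SimpleGraph (Fin 2))
        ((⊤ : SimpleGraph (Fin m)) ⊕g (⊥ : SimpleGraph (Fin 2)))) ≤ m + 3 / 2 := by
  classical
  have hmR : (21 : ℝ) ≤ m := by exact_mod_cast hm
  refine lambdaAlpha_le_of_forall_le _ hα0 (by linarith)
    (w := Sum.elim (fun _ => 5 / 4) fun _ => 1) (by rintro (_ | _) <;> norm_num)
    (by positivity) ?_
  intro v
  rw [← card_neighborFinset_eq_degree]
  rcases v with _ | _ | _
  · -- needs `α (m + 2) ≤ m - 11/2`: this is where `α < 2/3` and `m ≥ 21` enter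
    simp only [neighborFinset_graphJoin_inl, neighborFinset_top, card_disjSum, card_compl,
      Fintype.card_fin, card_singleton, Nat.add_one_sub_one, card_univ, Fintype.card_sum,
      Nat.cast_add, Nat.cast_one, Nat.cast_ofNat, Sum.elim_inl, sum_disjSum, sum_const, one_smul,
      Sum.elim_inr, nsmul_eq_mul, mul_one]
    nlinarith [mul_nonneg (by linarith : (0 : ℝ) ≤ 2 / 3 - α) (by linarith : (0 : ℝ) ≤ m - 21)]
  · simp only [neighborFinset_graphJoin_inr, neighborFinset_sum_inl, neighborFinset_top,
      disjSum_empty, card_disjSum, card_univ, Fintype.card_fin, card_map, card_compl,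
      card_singleton, Nat.cast_add, Nat.cast_ofNat, Nat.cast_sub (by omega : 1 ≤ m), Nat.cast_one,
      Sum.elim_inr, mul_one, sum_disjSum, Sum.elim_inl, sum_const, nsmul_eq_mul]
    linarith
  · simp only [neighborFinset_graphJoin_inr, neighborFinset_sum_inr, IsIsolated.bot,
      IsIsolated.neighborFinset_eq_empty, disjSum_empty, map_empty, card_map, card_univ,
      Fintype.card_fin, Nat.cast_ofNat, Sum.elim_inr, mul_one, sum_map,
      Function.Embedding.inl_apply, Sum.elim_inl, sum_const, nsmul_eq_mul]
    linarith

/-- For `0 ≤ α < 2/3` and every integer `n ≥ 25`, `λ_α(K_2 ∨ (K_{n−4} ∪ 2K_1)) < n − 2`. -/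
theorem lambdaAlpha_K2_join_lt (α : ℝ) (hα0 : 0 ≤ α) (hα1 : α < 2 / 3)
    (n : ℕ) (hn : 25 ≤ n) :
    lambdaAlpha α (graphJoin (⊤ : SimpleGraph (Fin 2))
        ((⊤ : SimpleGraph (Fin (n - 4))) ⊕g (⊥ : SimpleGraph (Fin 2)))) <
      (n : ℝ) - 2 := by
  obtain ⟨m, rfl⟩ : ∃ m, n = m + 4 := ⟨n - 4, by omega⟩
  have hle := lambdaAlpha_graphJoin_top_sum_top_bot_le hα0 hα1 (m := m) (by omega)
  rw [Nat.add_sub_cancel]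
  push_cast
  linarith
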